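/- Let Δ̄ be the 'twisted' Laplace operator Δ̄ = −Σ_{i=1}^{n₁} x_i∂_{y_i} + Σ_{r=n₁+1}^{n₂} ∂_{x_r}∂_{y_r} − Σ_{s=n₂+1}^n y_s∂_{x_s} and η̄ = Σ_{i=1}^{n₁} y_i∂_{x_i} + Σ_{r=n₁+1}^{n₂} x_r y_r + Σ_{s=n₂+1}^n x_s∂_{y_s} (multiplication and derivation operators on ℂ[x_1,...,x_n,y_1,...,y_n]), where 1 ≤ n₁ < n₁+1 < n₂ ≤ n. Then Δ̄∘η̄ − η̄∘Δ̄ = (n₂ − n₁)·Id + ♭ + ♭′, where ♭ = Σ_{r=n₁+1}^n x_r∂_{x_r} − Σ_{i=1}^{n₁} x_i∂_{x_i} and ♭′ = Σ_{i=1}^{n₂} y_i∂_{y_i} − Σ_{r=n₂+1}^n y_r∂_{y_r}. -/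

import Mathlib

/-! Both Δ̄ and η̄ are sums over `i` of an operator built from `xᵢ, yᵢ, ∂_{xᵢ}, ∂_{yᵢ}` alone.
Operators in the Weyl algebras of disjoint sets of variables commute, so the commutator is
the sum of the `n` commutators of matching summands. These are sl₂-type relations:
`[x∂_y, y∂_x] = x∂_x - y∂_y` in the outer blocks and `[∂_x∂_y, xy] = 1 + x∂_x + y∂_y` in the
middle block, which alone contributes to the constant `n₂ - n₁`. -/

open MvPolynomial

noncomputable section

abbrev PolyA (n : ℕ) := MvPolynomial (Fin n ⊕ Fin n) ℂ

variable (n : ℕ)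

def xv (i : Fin n) : PolyA n := X (Sum.inl i)
def yv (i : Fin n) : PolyA n := X (Sum.inr i)
def pdx (i : Fin n) : Module.End ℂ (PolyA n) :=
  (pderiv (Sum.inl i) : Derivation ℂ (PolyA n) (PolyA n)).toLinearMap
def pdy (i : Fin n) : Module.End ℂ (PolyA n) :=
  (pderiv (Sum.inr i) : Derivation ℂ (PolyA n) (PolyA n)).toLinearMap
def mx (i : Fin n) : Module.End ℂ (PolyA n) := LinearMap.mulLeft ℂ (xv n i)
def my (i : Fin n) : Module.End ℂ (PolyA n) := LinearMap.mulLeft ℂ (yv n i)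

variable (n₁ n₂ : ℕ)

/-- the twisted Laplace operator Δ̄ -/
def Δtw : Module.End ℂ (PolyA n) :=
  ∑ i : Fin n,
    if i.val < n₁ then -(mx n i ∘ₗ pdy n i)
    else if i.val < n₂ then pdx n i ∘ₗ pdy n i
    else -(my n i ∘ₗ pdx n i)

/-- the dual operator η̄ -/
def ηtw : Module.End ℂ (PolyA n) :=
  ∑ i : Fin n,
    if i.val < n₁ then my n i ∘ₗ pdx n i
    else if i.val < n₂ then mx n i ∘ₗ my n i
    else mx n i ∘ₗ pdy n i

/-- ♭ = Σ_{r>n₁} x_r∂_{x_r} − Σ_{i≤n₁} x_i∂_{x_i} -/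
def flat : Module.End ℂ (PolyA n) :=
  ∑ i : Fin n, if i.val < n₁ then -(mx n i ∘ₗ pdx n i) else mx n i ∘ₗ pdx n i

/-- ♭′ = Σ_{i≤n₂} y_i∂_{y_i} − Σ_{r>n₂} y_r∂_{y_r} -/
def flat' : Module.End ℂ (PolyA n) :=
  ∑ i : Fin n, if i.val < n₂ then my n i ∘ₗ pdy n i else -(my n i ∘ₗ pdy n i)

theorem lie_sum_sum_of_commute {A ι : Type*} [Ring A] (s : Finset ι) (a b : ι → A)
    (h : ∀ i ∈ s, ∀ j ∈ s, i ≠ j → Commute (a i) (b j)) :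
    ⁅∑ i ∈ s, a i, ∑ j ∈ s, b j⁆ = ∑ i ∈ s, ⁅a i, b i⁆ := by
  rw [Ring.lie_def, Finset.sum_mul_sum, Finset.sum_mul_sum, Finset.sum_comm (t := s),
    ← Finset.sum_sub_distrib]
  refine Finset.sum_congr rfl fun i hi => ?_
  rw [← Finset.sum_sub_distrib, Finset.sum_eq_single i
    (fun j hj hji => sub_eq_zero_of_eq (h j hj i hi hji).eq) (fun hi' => absurd hi hi'),
    Ring.lie_def]

theorem Fin.sum_univ_ite_le_and_lt {M : Type*} [AddCommMonoid M] {n m₁ m₂ : ℕ} (h : m₂ ≤ n)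
    (a : M) : ∑ i : Fin n, (if m₁ ≤ i.val ∧ i.val < m₂ then a else 0) = (m₂ - m₁) • a := by
  rw [Fin.sum_univ_eq_sum_range (fun k => if m₁ ≤ k ∧ k < m₂ then a else 0), ← Finset.sum_filter,
    show (Finset.range n).filter (fun k => m₁ ≤ k ∧ k < m₂) = Finset.Ico m₁ m₂ by
      ext k; simp; omega,
    Finset.sum_const, Nat.card_Ico]

namespace MvPolynomial

variable {R σ : Type*} [CommRing R]

local notation "𝐗" v:max => LinearMap.mulLeft R (X v : MvPolynomial σ R)
local notation "𝐃" v:max =>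
  ((pderiv v : Derivation R (MvPolynomial σ R) (MvPolynomial σ R)) : Module.End R (MvPolynomial σ R))

theorem lie_pderiv_pderiv (v w : σ) :
    ⁅(pderiv v : Derivation R (MvPolynomial σ R) (MvPolynomial σ R)),
      (pderiv w : Derivation R (MvPolynomial σ R) (MvPolynomial σ R))⁆ = 0 := by
  classical
  refine derivation_ext fun k => ?_
  simp [Derivation.commutator_apply, pderiv_X, Pi.single_apply, apply_ite]

theorem commute_pderiv_pderiv (v w : σ) : Commute (𝐃 v) (𝐃 w) := by
  rw [commute_iff_lie_eq, ← Derivation.commutator_coe_linear_map, lie_pderiv_pderiv]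
  rfl

theorem pderiv_pderiv_comm (v w : σ) (p : MvPolynomial σ R) :
    pderiv v (pderiv w p) = pderiv w (pderiv v p) :=
  LinearMap.congr_fun (commute_pderiv_pderiv v w).eq p

theorem commute_mulLeft_X_mulLeft_X (v w : σ) : Commute (𝐗 v) (𝐗 w) :=
  LinearMap.ext fun p => by simp only [Module.End.mul_apply, LinearMap.mulLeft_apply]; ring

theorem commute_pderiv_mulLeft_X {v w : σ} (h : v ≠ w) : Commute (𝐃 v) (𝐗 w) :=
  LinearMap.ext fun p => by simp [pderiv_X_of_ne h.symm]

def weylSubalgebra (s : Set σ) : Subalgebra R (Module.End R (MvPolynomial σ R)) :=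
  Algebra.adjoin R ((fun v => 𝐗 v) '' s ∪ (fun v => 𝐃 v) '' s)

theorem mulLeft_X_mem_weylSubalgebra {s : Set σ} {v : σ} (hv : v ∈ s) : 𝐗 v ∈ weylSubalgebra (R := R) s :=
  Algebra.subset_adjoin (Or.inl ⟨v, hv, rfl⟩)

theorem pderiv_mem_weylSubalgebra {s : Set σ} {v : σ} (hv : v ∈ s) : 𝐃 v ∈ weylSubalgebra (R := R) s :=
  Algebra.subset_adjoin (Or.inr ⟨v, hv, rfl⟩)

theorem commute_of_mem_weylSubalgebra {s t : Set σ} (hst : Disjoint s t)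
    {a b : Module.End R (MvPolynomial σ R)} (ha : a ∈ weylSubalgebra s) (hb : b ∈ weylSubalgebra t) :
    Commute a b := by
  refine Algebra.commute_of_mem_adjoin_of_forall_mem_commute hb ?_
  rintro _ (⟨w, hw, rfl⟩ | ⟨w, hw, rfl⟩) <;>
    refine (Algebra.commute_of_mem_adjoin_of_forall_mem_commute ha ?_).symm <;>
    rintro _ (⟨v, hv, rfl⟩ | ⟨v, hv, rfl⟩)
  all_goals have hvw : w ≠ v := fun h => Set.disjoint_left.mp hst hv (h ▸ hw)
  · exact commute_mulLeft_X_mulLeft_X w v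
  · exact (commute_pderiv_mulLeft_X hvw.symm).symm
  · exact commute_pderiv_mulLeft_X hvw
  · exact commute_pderiv_pderiv w v

theorem lie_mulLeft_X_pderiv (u v : σ) :
    ⁅𝐗 u ∘ₗ 𝐃 v, 𝐗 v ∘ₗ 𝐃 u⁆ = 𝐗 u ∘ₗ 𝐃 u - 𝐗 v ∘ₗ 𝐃 v := by
  refine LinearMap.ext fun p => ?_
  simp only [Ring.lie_def, LinearMap.sub_apply, Module.End.mul_apply, LinearMap.coe_comp,
    Derivation.coeFn_coe, Function.comp_apply, LinearMap.mulLeft_apply, Derivation.leibniz,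
    smul_eq_mul, pderiv_X_self, mul_one, pderiv_pderiv_comm u v]
  ring

theorem lie_pderiv_pderiv_mulLeft_X_X {u v : σ} (h : u ≠ v) :
    ⁅𝐃 u ∘ₗ 𝐃 v, 𝐗 u ∘ₗ 𝐗 v⁆ = 1 + 𝐗 u ∘ₗ 𝐃 u + 𝐗 v ∘ₗ 𝐃 v := by
  refine LinearMap.ext fun p => ?_
  simp only [Ring.lie_def, LinearMap.sub_apply, Module.End.mul_apply, LinearMap.coe_comp,
    Function.comp_apply, LinearMap.mulLeft_apply, Derivation.coeFn_coe, Derivation.leibniz,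
    smul_eq_mul, pderiv_X_self, mul_one, pderiv_X_of_ne h, mul_zero, add_zero, map_add,
    pderiv_pderiv_comm u v, pderiv_X_of_ne h.symm, LinearMap.add_apply, Module.End.one_apply]
  ring

end MvPolynomial

def ΔtwTerm (i : Fin n) : Module.End ℂ (PolyA n) :=
  if i.val < n₁ then -(mx n i ∘ₗ pdy n i)
  else if i.val < n₂ then pdx n i ∘ₗ pdy n i
  else -(my n i ∘ₗ pdx n i)

def ηtwTerm (i : Fin n) : Module.End ℂ (PolyA n) :=
  if i.val < n₁ then my n i ∘ₗ pdx n i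
  else if i.val < n₂ then mx n i ∘ₗ my n i
  else mx n i ∘ₗ pdy n i

theorem mx_mem_weylSubalgebra (i : Fin n) :
    mx n i ∈ weylSubalgebra (R := ℂ) {Sum.inl i, Sum.inr i} :=
  mulLeft_X_mem_weylSubalgebra (by simp)

theorem my_mem_weylSubalgebra (i : Fin n) :
    my n i ∈ weylSubalgebra (R := ℂ) {Sum.inl i, Sum.inr i} :=
  mulLeft_X_mem_weylSubalgebra (by simp)

theorem pdx_mem_weylSubalgebra (i : Fin n) :
    pdx n i ∈ weylSubalgebra (R := ℂ) {Sum.inl i, Sum.inr i} :=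
  pderiv_mem_weylSubalgebra (by simp)

theorem pdy_mem_weylSubalgebra (i : Fin n) :
    pdy n i ∈ weylSubalgebra (R := ℂ) {Sum.inl i, Sum.inr i} :=
  pderiv_mem_weylSubalgebra (by simp)

theorem ΔtwTerm_mem_weylSubalgebra (i : Fin n) :
    ΔtwTerm n n₁ n₂ i ∈ weylSubalgebra (R := ℂ) {Sum.inl i, Sum.inr i} := by
  unfold ΔtwTerm
  split_ifs
  · exact neg_mem (mul_mem (mx_mem_weylSubalgebra n i) (pdy_mem_weylSubalgebra n i))
  · exact mul_mem (pdx_mem_weylSubalgebra n i) (pdy_mem_weylSubalgebra n i)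
  · exact neg_mem (mul_mem (my_mem_weylSubalgebra n i) (pdx_mem_weylSubalgebra n i))

theorem ηtwTerm_mem_weylSubalgebra (i : Fin n) :
    ηtwTerm n n₁ n₂ i ∈ weylSubalgebra (R := ℂ) {Sum.inl i, Sum.inr i} := by
  unfold ηtwTerm
  split_ifs
  · exact mul_mem (my_mem_weylSubalgebra n i) (pdx_mem_weylSubalgebra n i)
  · exact mul_mem (mx_mem_weylSubalgebra n i) (my_mem_weylSubalgebra n i)
  · exact mul_mem (mx_mem_weylSubalgebra n i) (pdy_mem_weylSubalgebra n i)

theorem commute_ΔtwTerm_ηtwTerm {i j : Fin n} (hij : i ≠ j) :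
    Commute (ΔtwTerm n n₁ n₂ i) (ηtwTerm n n₁ n₂ j) :=
  commute_of_mem_weylSubalgebra (by simp [hij.symm]) (ΔtwTerm_mem_weylSubalgebra n n₁ n₂ i)
    (ηtwTerm_mem_weylSubalgebra n n₁ n₂ j)

theorem lie_ΔtwTerm_ηtwTerm (hle : n₁ ≤ n₂) (i : Fin n) :
    ⁅ΔtwTerm n n₁ n₂ i, ηtwTerm n n₁ n₂ i⁆
      = (if n₁ ≤ i.val ∧ i.val < n₂ then 1 else 0)
        + (if i.val < n₁ then -(mx n i ∘ₗ pdx n i) else mx n i ∘ₗ pdx n i)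
        + (if i.val < n₂ then my n i ∘ₗ pdy n i else -(my n i ∘ₗ pdy n i)) := by
  have neg_lie (a b : Module.End ℂ (PolyA n)) : ⁅-a, b⁆ = -⁅a, b⁆ := by
    refine LinearMap.ext fun p => ?_
    simp only [Ring.lie_def, LinearMap.sub_apply, Module.End.mul_apply, LinearMap.neg_apply,
      map_neg, sub_neg_eq_add, neg_sub]
    abel
  have hxy : ⁅mx n i ∘ₗ pdy n i, my n i ∘ₗ pdx n i⁆ = mx n i ∘ₗ pdx n i - my n i ∘ₗ pdy n i :=
    lie_mulLeft_X_pderiv _ _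
  have hyx : ⁅my n i ∘ₗ pdx n i, mx n i ∘ₗ pdy n i⁆ = my n i ∘ₗ pdy n i - mx n i ∘ₗ pdx n i :=
    lie_mulLeft_X_pderiv _ _
  unfold ΔtwTerm ηtwTerm
  split_ifs <;> first
    | omega
    | (rw [neg_lie, hxy]; abel)
    | (rw [neg_lie, hyx]; abel)
    | exact lie_pderiv_pderiv_mulLeft_X_X Sum.inl_ne_inr

theorem twisted_commutator (h₂ : n₁ + 1 < n₂) (h₃ : n₂ ≤ n) :
    Δtw n n₁ n₂ ∘ₗ ηtw n n₁ n₂ - ηtw n n₁ n₂ ∘ₗ Δtw n n₁ n₂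
      = ((n₂ : ℂ) - (n₁ : ℂ)) • (1 : Module.End ℂ (PolyA n))
        + flat n n₁ + flat' n n₂ := by
  have hle : n₁ ≤ n₂ := by omega
  calc Δtw n n₁ n₂ ∘ₗ ηtw n n₁ n₂ - ηtw n n₁ n₂ ∘ₗ Δtw n n₁ n₂
      = ∑ i, ⁅ΔtwTerm n n₁ n₂ i, ηtwTerm n n₁ n₂ i⁆ :=
        lie_sum_sum_of_commute _ _ _ fun i _ j _ hij => commute_ΔtwTerm_ηtwTerm n n₁ n₂ hij
    _ = _ := by
      rw [Finset.sum_congr rfl fun i _ => lie_ΔtwTerm_ηtwTerm n n₁ n₂ hle i,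
        Finset.sum_add_distrib, Finset.sum_add_distrib, Fin.sum_univ_ite_le_and_lt h₃,
        ← Nat.cast_smul_eq_nsmul ℂ, Nat.cast_sub hle]
      rfl
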